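/- The logical operators X̄ = Z₀Z₁X₂Z₅ and Z̄ = Z₀Z₂Z₅Z₆ of the [[8,1,3]] code each commute with all seven stabilizer generators, anticommute with each other, and neither lies in the stabilizer group generated by the seven generators. -/
import Mathlib


open Matrix

noncomputable def pauliMat : Fin 4 → Matrix (Fin 2) (Fin 2) ℂ :=
  ![1, !![0, 1; 1, 0], !![0, -Complex.I; Complex.I, 0], !![1, 0; 0, -1]]

noncomputable def pauliString {n : ℕ} (P : Fin n → Fin 4) :
    Matrix (Fin n → Fin 2) (Fin n → Fin 2) ℂ :=
  fun x y => ∏ i, pauliMat (P i) (x i) (y i)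

/-- Stabilizer generators of the `[[8,1,3]]` code, with Pauli labels
`0 = I`, `1 = X`, `2 = Y`, `3 = Z`:
`g₁ = Z₀X₁Z₂Z₄`, `g₂ = Y₀Y₂Z₃Z₄`, `g₃ = Z₀Z₁X₄Z₆`, `g₄ = X₁Z₃X₅X₆`,
`g₅ = Z₃Z₅Z₆X₇`, `g₆ = Z₀X₃Z₆Z₇`, `g₇ = Z₁X₂X₃Z₄X₆X₇`. -/
def gens : Fin 7 → Fin 8 → Fin 4 :=
  ![![3, 1, 3, 0, 3, 0, 0, 0],
    ![2, 0, 2, 3, 3, 0, 0, 0],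
    ![3, 3, 0, 0, 1, 0, 3, 0],
    ![0, 1, 0, 3, 0, 1, 1, 0],
    ![0, 0, 0, 3, 0, 3, 3, 1],
    ![3, 0, 0, 1, 0, 0, 3, 3],
    ![0, 3, 1, 1, 3, 0, 1, 1]]

/-- X-part bit of a Pauli label. -/
def xbit : Fin 4 → ZMod 2 := ![0, 1, 1, 0]

/-- Z-part bit of a Pauli label. -/
def zbit : Fin 4 → ZMod 2 := ![0, 0, 1, 1]

/-- Binary symplectic representation `(X-part | Z-part)` of a Pauli string. -/
def symp {n : ℕ} (P : Fin n → Fin 4) : (Fin n → ZMod 2) × (Fin n → ZMod 2) :=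
  (fun i => xbit (P i), fun i => zbit (P i))

/-- Symplectic inner product over `F₂`. -/
def sympProd {n : ℕ} (v w : (Fin n → ZMod 2) × (Fin n → ZMod 2)) : ZMod 2 :=
  (∑ i, v.1 i * w.2 i) + (∑ i, v.2 i * w.1 i)

/-- Syndrome of a Pauli error with respect to the `[[8,1,3]]` generators. -/
def synd (e : Fin 8 → Fin 4) : Fin 7 → ZMod 2 :=
  fun j => sympProd (symp e) (symp (gens j))

/-- The single-qubit error with Pauli `p + 1 ∈ {X, Y, Z}` on qubit `q`. -/
def singleErr (q : Fin 8) (p : Fin 3) : Fin 8 → Fin 4 :=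
  fun i => if i = q then p.succ else 0

/-- Logical `X̄ = Z₀Z₁X₂Z₅`. -/
def XbarL : Fin 8 → Fin 4 := ![3, 3, 1, 0, 0, 3, 0, 0]

/-- Logical `Z̄ = Z₀Z₂Z₅Z₆`. -/
def ZbarL : Fin 8 → Fin 4 := ![3, 0, 3, 0, 0, 3, 3, 0]

noncomputable def ph : Fin 4 → Fin 4 → ℂ :=
  ![![1,1,1,1], ![1,1,Complex.I,-Complex.I], ![1,-Complex.I,1,Complex.I], ![1,Complex.I,-Complex.I,1]]

def pm : Fin 4 → Fin 4 → Fin 4 :=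
  ![![0,1,2,3], ![1,0,3,2], ![2,3,0,1], ![3,2,1,0]]

lemma pm_comm : ∀ p q : Fin 4, pm p q = pm q p := by decide
lemma pm_diag : ∀ p : Fin 4, pm p p = 0 := by decide

lemma c8_0 {α : Type*} (a b c d e f g h : α) : ![a,b,c,d,e,f,g,h] 0 = a := rfl
lemma c8_1 {α : Type*} (a b c d e f g h : α) : ![a,b,c,d,e,f,g,h] 1 = b := rfl
lemma c8_2 {α : Type*} (a b c d e f g h : α) : ![a,b,c,d,e,f,g,h] 2 = c := rfl
lemma c8_3 {α : Type*} (a b c d e f g h : α) : ![a,b,c,d,e,f,g,h] 3 = d := rfl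
lemma c8_4 {α : Type*} (a b c d e f g h : α) : ![a,b,c,d,e,f,g,h] 4 = e := rfl
lemma c8_5 {α : Type*} (a b c d e f g h : α) : ![a,b,c,d,e,f,g,h] 5 = f := rfl
lemma c8_6 {α : Type*} (a b c d e f g h : α) : ![a,b,c,d,e,f,g,h] 6 = g := rfl
lemma c8_7 {α : Type*} (a b c d e f g h : α) : ![a,b,c,d,e,f,g,h] 7 = h := rfl
lemma c4_0 {α : Type*} (a b c d : α) : ![a,b,c,d] 0 = a := rfl
lemma c4_1 {α : Type*} (a b c d : α) : ![a,b,c,d] 1 = b := rfl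
lemma c4_2 {α : Type*} (a b c d : α) : ![a,b,c,d] 2 = c := rfl
lemma c4_3 {α : Type*} (a b c d : α) : ![a,b,c,d] 3 = d := rfl

lemma pauliMat_mul (p q : Fin 4) :
    pauliMat p * pauliMat q = ph p q • pauliMat (pm p q) := by
  fin_cases p <;> fin_cases q <;>
    · ext i j
      fin_cases i <;> fin_cases j <;>
        simp [pauliMat, ph, pm, Matrix.mul_apply, Fin.sum_univ_two, Matrix.one_apply,
          Complex.I_mul_I, Matrix.vecHead, Matrix.vecTail]

lemma pauliString_mul {n : ℕ} (P Q : Fin n → Fin 4) :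
    pauliString P * pauliString Q =
      (∏ i, ph (P i) (Q i)) • pauliString (fun i => pm (P i) (Q i)) := by
  ext x y
  rw [Matrix.mul_apply, Matrix.smul_apply]
  simp only [pauliString]
  have key : (∑ z : Fin n → Fin 2, (∏ i, pauliMat (P i) (x i) (z i)) * ∏ i, pauliMat (Q i) (z i) (y i))
      = ∏ i, (pauliMat (P i) * pauliMat (Q i)) (x i) (y i) := by
    simp only [← Finset.prod_mul_distrib, Matrix.mul_apply]
    rw [Finset.prod_univ_sum]
    simp [Fintype.piFinset_univ]
  rw [key]
  simp only [pauliMat_mul, Matrix.smul_apply, smul_eq_mul, Finset.prod_mul_distrib]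

lemma pauliString_zero {n : ℕ} : pauliString (fun _ : Fin n => (0 : Fin 4)) = 1 := by
  ext x y
  simp only [pauliString, pauliMat]
  by_cases h : x = y
  · subst h; simp [Matrix.one_apply]
  · obtain ⟨i, hi⟩ := Function.ne_iff.mp h
    rw [Matrix.one_apply_ne h]
    exact Finset.prod_eq_zero (Finset.mem_univ i) (by simp [Matrix.one_apply, hi])

lemma ph_diag : ∀ p : Fin 4, ph p p = 1 := by
  intro p; fin_cases p <;> simp [ph]

lemma pauliString_sq {n : ℕ} (P : Fin n → Fin 4) :
    pauliString P * pauliString P = 1 := by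
  rw [pauliString_mul]
  simp [ph_diag, pm_diag, pauliString_zero]

lemma pauli_comm_of {n : ℕ} (P Q : Fin n → Fin 4)
    (h : (∏ i, ph (P i) (Q i)) = ∏ i, ph (Q i) (P i)) :
    pauliString P * pauliString Q = pauliString Q * pauliString P := by
  rw [pauliString_mul, pauliString_mul, h]
  have : (fun i => pm (P i) (Q i)) = fun i => pm (Q i) (P i) :=
    funext fun i => pm_comm _ _
  rw [this]

/-- The logical operators `X̄` and `Z̄` of the `[[8,1,3]]` code commute with all
seven stabilizer generators, anticommute with each other, and neither lies in
the stabilizer group generated by the seven generators. -/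
theorem logical_ops_of_813 :
    (∀ j : Fin 7,
        pauliString XbarL * pauliString (gens j) =
          pauliString (gens j) * pauliString XbarL) ∧
    (∀ j : Fin 7,
        pauliString ZbarL * pauliString (gens j) =
          pauliString (gens j) * pauliString ZbarL) ∧
    pauliString XbarL * pauliString ZbarL =
      -(pauliString ZbarL * pauliString XbarL) ∧
    pauliString XbarL ∉
      Submonoid.closure (Set.range fun i => pauliString (gens i)) ∧
    pauliString ZbarL ∉
      Submonoid.closure (Set.range fun i => pauliString (gens i)) := by
  have hX : ∀ j : Fin 7,
      pauliString XbarL * pauliString (gens j) =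
        pauliString (gens j) * pauliString XbarL := by
    intro j
    fin_cases j
    · exact pauli_comm_of XbarL ![3, 1, 3, 0, 3, 0, 0, 0] (by
        simp only [XbarL, ph, Fin.prod_univ_eight, c8_0, c8_1, c8_2, c8_3, c8_4, c8_5,
          c8_6, c8_7, c4_0, c4_1, c4_2, c4_3]
        try ring)
    · exact pauli_comm_of XbarL ![2, 0, 2, 3, 3, 0, 0, 0] (by
        simp only [XbarL, ph, Fin.prod_univ_eight, c8_0, c8_1, c8_2, c8_3, c8_4, c8_5,
          c8_6, c8_7, c4_0, c4_1, c4_2, c4_3]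
        try ring)
    · exact pauli_comm_of XbarL ![3, 3, 0, 0, 1, 0, 3, 0] (by
        simp only [XbarL, ph, Fin.prod_univ_eight, c8_0, c8_1, c8_2, c8_3, c8_4, c8_5,
          c8_6, c8_7, c4_0, c4_1, c4_2, c4_3]
        try ring)
    · exact pauli_comm_of XbarL ![0, 1, 0, 3, 0, 1, 1, 0] (by
        simp only [XbarL, ph, Fin.prod_univ_eight, c8_0, c8_1, c8_2, c8_3, c8_4, c8_5,
          c8_6, c8_7, c4_0, c4_1, c4_2, c4_3]
        try ring)
    · exact pauli_comm_of XbarL ![0, 0, 0, 3, 0, 3, 3, 1] (by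
        simp only [XbarL, ph, Fin.prod_univ_eight, c8_0, c8_1, c8_2, c8_3, c8_4, c8_5,
          c8_6, c8_7, c4_0, c4_1, c4_2, c4_3]
        try ring)
    · exact pauli_comm_of XbarL ![3, 0, 0, 1, 0, 0, 3, 3] (by
        simp only [XbarL, ph, Fin.prod_univ_eight, c8_0, c8_1, c8_2, c8_3, c8_4, c8_5,
          c8_6, c8_7, c4_0, c4_1, c4_2, c4_3]
        try ring)
    · exact pauli_comm_of XbarL ![0, 3, 1, 1, 3, 0, 1, 1] (by
        simp only [XbarL, ph, Fin.prod_univ_eight, c8_0, c8_1, c8_2, c8_3, c8_4, c8_5,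
          c8_6, c8_7, c4_0, c4_1, c4_2, c4_3]
        try ring)
  have hZ : ∀ j : Fin 7,
      pauliString ZbarL * pauliString (gens j) =
        pauliString (gens j) * pauliString ZbarL := by
    intro j
    fin_cases j
    · exact pauli_comm_of ZbarL ![3, 1, 3, 0, 3, 0, 0, 0] (by
        simp only [ZbarL, ph, Fin.prod_univ_eight, c8_0, c8_1, c8_2, c8_3, c8_4, c8_5,
          c8_6, c8_7, c4_0, c4_1, c4_2, c4_3]
        try ring)
    · exact pauli_comm_of ZbarL ![2, 0, 2, 3, 3, 0, 0, 0] (by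
        simp only [ZbarL, ph, Fin.prod_univ_eight, c8_0, c8_1, c8_2, c8_3, c8_4, c8_5,
          c8_6, c8_7, c4_0, c4_1, c4_2, c4_3]
        try ring)
    · exact pauli_comm_of ZbarL ![3, 3, 0, 0, 1, 0, 3, 0] (by
        simp only [ZbarL, ph, Fin.prod_univ_eight, c8_0, c8_1, c8_2, c8_3, c8_4, c8_5,
          c8_6, c8_7, c4_0, c4_1, c4_2, c4_3]
        try ring)
    · exact pauli_comm_of ZbarL ![0, 1, 0, 3, 0, 1, 1, 0] (by
        simp only [ZbarL, ph, Fin.prod_univ_eight, c8_0, c8_1, c8_2, c8_3, c8_4, c8_5,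
          c8_6, c8_7, c4_0, c4_1, c4_2, c4_3]
        try ring)
    · exact pauli_comm_of ZbarL ![0, 0, 0, 3, 0, 3, 3, 1] (by
        simp only [ZbarL, ph, Fin.prod_univ_eight, c8_0, c8_1, c8_2, c8_3, c8_4, c8_5,
          c8_6, c8_7, c4_0, c4_1, c4_2, c4_3]
        try ring)
    · exact pauli_comm_of ZbarL ![3, 0, 0, 1, 0, 0, 3, 3] (by
        simp only [ZbarL, ph, Fin.prod_univ_eight, c8_0, c8_1, c8_2, c8_3, c8_4, c8_5,
          c8_6, c8_7, c4_0, c4_1, c4_2, c4_3]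
        try ring)
    · exact pauli_comm_of ZbarL ![0, 3, 1, 1, 3, 0, 1, 1] (by
        simp only [ZbarL, ph, Fin.prod_univ_eight, c8_0, c8_1, c8_2, c8_3, c8_4, c8_5,
          c8_6, c8_7, c4_0, c4_1, c4_2, c4_3]
        try ring)
  have hanti : pauliString XbarL * pauliString ZbarL =
      -(pauliString ZbarL * pauliString XbarL) := by
    rw [pauliString_mul, pauliString_mul]
    have hpm : (fun i => pm (XbarL i) (ZbarL i)) = fun i => pm (ZbarL i) (XbarL i) :=
      funext fun i => pm_comm _ _
    rw [hpm]
    have h1 : (∏ i, ph (XbarL i) (ZbarL i)) = -Complex.I := by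
      simp only [XbarL, ZbarL, ph, Fin.prod_univ_eight, c8_0, c8_1, c8_2, c8_3, c8_4,
        c8_5, c8_6, c8_7, c4_0, c4_1, c4_2, c4_3]
      ring
    have h2 : (∏ i, ph (ZbarL i) (XbarL i)) = Complex.I := by
      simp only [XbarL, ZbarL, ph, Fin.prod_univ_eight, c8_0, c8_1, c8_2, c8_3, c8_4,
        c8_5, c8_6, c8_7, c4_0, c4_1, c4_2, c4_3]
      ring
    rw [h1, h2, ← neg_smul]
  have hclosure : ∀ (L : Fin 8 → Fin 4),
      (∀ j : Fin 7, pauliString L * pauliString (gens j) =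
          pauliString (gens j) * pauliString L) →
      ∀ M ∈ Submonoid.closure (Set.range fun i => pauliString (gens i)),
        M * pauliString L = pauliString L * M := by
    intro L hL M hM
    induction hM using Submonoid.closure_induction with
    | mem x hx => obtain ⟨j, rfl⟩ := hx; exact (hL j).symm
    | one => simp
    | mul a b _ _ ha hb => rw [mul_assoc, hb, ← mul_assoc, ha, mul_assoc]
  have hkill : ∀ (A B : Fin 8 → Fin 4),
      pauliString A * pauliString B = -(pauliString B * pauliString A) →
      pauliString A * pauliString B = pauliString B * pauliString A → False := by
    intro A B h1 h2
    have h3 : pauliString B * pauliString A = 0 := by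
      have hadd : pauliString B * pauliString A + pauliString B * pauliString A = 0 := by
        nth_rewrite 1 [← h2]
        rw [h1]; simp
      have h2s : (2 : ℂ) • (pauliString B * pauliString A) = 0 := by
        rw [two_smul]; exact hadd
      simpa using (smul_eq_zero.mp h2s).resolve_left (by norm_num)
    have h4 : pauliString B * pauliString A * pauliString A = 0 := by rw [h3, zero_mul]
    rw [mul_assoc, pauliString_sq, mul_one] at h4
    have hone := pauliString_sq B
    rw [h4, zero_mul] at hone
    exact zero_ne_one hone
  refine ⟨hX, hZ, hanti, ?_, ?_⟩
  · intro hmem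
    exact hkill XbarL ZbarL hanti (hclosure ZbarL hZ _ hmem)
  · intro hmem
    have hc := hclosure XbarL hX _ hmem
    have hanti2 : pauliString ZbarL * pauliString XbarL =
        -(pauliString XbarL * pauliString ZbarL) := by rw [hanti, neg_neg]
    exact hkill ZbarL XbarL hanti2 hc
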